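/- arXiv:math-ph/0602064 — 4 statements merged into one kernel-verified Lean document; each statement's English description precedes it below -/
import Mathlib

section
/- Let c > 0 and p = c² - 1, and suppose w ≠ 0, w² ≠ c², z = w³/(w²-c²), and ξ = w + p/w. Then with a = 2c - 1/c, ξ satisfies the modified Pastur equation ξ³ - z ξ² + (1-a²) ξ + a² z + (c²-1)³/(c² z) = 0 (equivalently, z·(ξ³ - zξ² + (1-a²)ξ + a²z) + (c²-1)³/c² = 0) whenever z ≠ 0. -/
theorem modified_pastur_cleared {K : Type*} [Field K] {c w z ξ a : K} (hc : c ≠ 0) (hw : w ≠ 0)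
    (hz : z * (w ^ 2 - c ^ 2) = w ^ 3) (hξ : ξ = w + (c ^ 2 - 1) / w) (ha : a = 2 * c - 1 / c) :
    z * (ξ ^ 3 - z * ξ ^ 2 + (1 - a ^ 2) * ξ + a ^ 2 * z) + (c ^ 2 - 1) ^ 3 / c ^ 2 = 0 := by
  subst hξ ha
  field_simp
  -- once denominators are cleared, the equation is a polynomial multiple of the covering relation
  linear_combination (w * (c ^ 2 - 1) ^ 2 * z - w ^ 3 * c ^ 2 * z - (c ^ 2 - 1) ^ 3) * hz

/-- If `z = w³/(w²-c²)` and `ξ = w + (c²-1)/w`, then with `a = 2c - 1/c`,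
`ξ` satisfies the modified Pastur equation. -/
theorem modified_pastur_equation (c : ℝ) (hc : 0 < c) (w z ξ a : ℂ)
    (hw : w ≠ 0) (hw2 : w ^ 2 ≠ (c : ℂ) ^ 2) (hz : z ≠ 0)
    (hzw : z = w ^ 3 / (w ^ 2 - (c : ℂ) ^ 2))
    (hxi : ξ = w + ((c : ℂ) ^ 2 - 1) / w)
    (hac : a = 2 * (c : ℂ) - 1 / (c : ℂ)) :
    ξ ^ 3 - z * ξ ^ 2 + (1 - a ^ 2) * ξ + a ^ 2 * z
      + ((c : ℂ) ^ 2 - 1) ^ 3 / ((c : ℂ) ^ 2 * z) = 0 := by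
  have hc0 : (c : ℂ) ≠ 0 := by exact_mod_cast hc.ne'
  have hcover : z * (w ^ 2 - (c : ℂ) ^ 2) = w ^ 3 := by
    rw [hzw, div_mul_cancel₀ _ (sub_ne_zero.mpr hw2)]
  calc _ = (z * (ξ ^ 3 - z * ξ ^ 2 + (1 - a ^ 2) * ξ + a ^ 2 * z)
          + ((c : ℂ) ^ 2 - 1) ^ 3 / (c : ℂ) ^ 2) / z := by
        field_simp
    _ = 0 := by rw [modified_pastur_cleared hc0 hw hcover hxi hac, zero_div]
end

section
/- Suppose f₁, g₁ are analytic functions in a neighborhood of 0 satisfying f₁(z)g₁(z) = 1/9 and f₁(z)³ - c² + (2/27)z² + g₁(z)³ z⁴ = 0 with f₁(0) = c^{2/3}, c > 0. Then the function w(z) = -z^{1/3} f₁(z) - z^{5/3} g₁(z) + z/3 (principal branches, z ∉ (-∞,0]) satisfies z·(w(z)² - c²) = w(z)³, i.e., it solves the equation z = w³/(w²-c²). -/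
/-!
Put `u = z^{1/3} f₁(z)` and `v = z^{5/3} g₁(z)`. The two identities say exactly that
`u v = z²/9` and `u³ + v³ = c² z - 2z³/27`, which are Cardano's conditions for `u + v` to be a
root of the depressed form `t³ - (z²/3) t + (c² z - 2z³/27)` of the cubic `w³ - z w² + c² z`
under `w = z/3 - t`. The branches only enter through `(z^{1/3})³ = z` and
`z^{5/3} = (z^{1/3})⁵`, which hold for principal branches on all of `ℂ`.
-/

theorem add_cube_add_mul_add_eq_zero_of_cardano {R : Type*} [CommRing R] {u v p q : R}
    (hprod : 3 * u * v = -p) (hsum : u ^ 3 + v ^ 3 = -q) :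
    (u + v) ^ 3 + p * (u + v) + q = 0 := by
  linear_combination (u + v) * hprod + hsum

theorem mul_sq_sub_sq_eq_cube_of_cardano {K : Type*} [Field K] [CharZero K] {z c u v : K}
    (hprod : u * v = z ^ 2 / 9) (hsum : u ^ 3 + v ^ 3 = c ^ 2 * z - 2 * z ^ 3 / 27) :
    z * ((z / 3 - (u + v)) ^ 2 - c ^ 2) = (z / 3 - (u + v)) ^ 3 := by
  have hroot := add_cube_add_mul_add_eq_zero_of_cardano (u := u) (v := v) (p := -z ^ 2 / 3)
    (q := 2 * z ^ 3 / 27 - c ^ 2 * z) (by linear_combination 3 * hprod)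
    (by linear_combination hsum)
  linear_combination hroot

theorem Complex.cpow_five_thirds (z : ℂ) : z ^ ((5 : ℂ) / 3) = (z ^ ((1 : ℂ) / 3)) ^ 5 := by
  rw [← Complex.cpow_nat_mul]
  norm_num

theorem Complex.cpow_one_third_pow_three (z : ℂ) : (z ^ ((1 : ℂ) / 3)) ^ 3 = z := by
  rw [one_div, Complex.cpow_ofNat_inv_pow]

theorem w_solves_equation_general (c : ℝ) (U : Set ℂ)
    (f₁ g₁ : ℂ → ℂ)
    (h1 : ∀ z ∈ U, f₁ z * g₁ z = 1 / 9)
    (h2 : ∀ z ∈ U, f₁ z ^ 3 - (c : ℂ) ^ 2 + (2 / 27) * z ^ 2 + g₁ z ^ 3 * z ^ 4 = 0) :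
    ∀ z ∈ U, ¬(z.im = 0 ∧ z.re ≤ 0) →
      z * ((-(z ^ ((1 : ℂ) / 3)) * f₁ z - z ^ ((5 : ℂ) / 3) * g₁ z + z / 3) ^ 2
            - (c : ℂ) ^ 2)
        = (-(z ^ ((1 : ℂ) / 3)) * f₁ z - z ^ ((5 : ℂ) / 3) * g₁ z + z / 3) ^ 3 := by
  intro z hz _
  set a := z ^ ((1 : ℂ) / 3)
  have ha : a ^ 3 = z := Complex.cpow_one_third_pow_three z
  rw [Complex.cpow_five_thirds]
  have hprod : (a * f₁ z) * (a ^ 5 * g₁ z) = z ^ 2 / 9 := by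
    linear_combination (a ^ 6) * h1 z hz + (a ^ 3 + z) / 9 * ha
  have hsum : (a * f₁ z) ^ 3 + (a ^ 5 * g₁ z) ^ 3 = (c : ℂ) ^ 2 * z - 2 * z ^ 3 / 27 := by
    linear_combination z * h2 z hz + (f₁ z ^ 3 + (a ^ 12 + a ^ 9 * z + a ^ 6 * z ^ 2
      + a ^ 3 * z ^ 3 + z ^ 4) * g₁ z ^ 3) * ha
  linear_combination mul_sq_sub_sq_eq_cube_of_cardano hprod hsum

/-- If `f₁ g₁ = 1/9` and `f₁³ - c² + (2/27)z² + g₁³ z⁴ = 0` near `0`, then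
`w(z) = -z^{1/3} f₁(z) - z^{5/3} g₁(z) + z/3` (principal branches) satisfies
`z (w² - c²) = w³` off the cut `(-∞,0]`. -/
theorem w_solves_equation (c : ℝ) (hc : 0 < c) (U : Set ℂ) (hU : U ∈ nhds (0 : ℂ))
    (f₁ g₁ : ℂ → ℂ) (hf : AnalyticOn ℂ f₁ U) (hg : AnalyticOn ℂ g₁ U)
    (hf0 : f₁ 0 = ((c ^ ((2 : ℝ) / 3) : ℝ) : ℂ))
    (h1 : ∀ z ∈ U, f₁ z * g₁ z = 1 / 9)
    (h2 : ∀ z ∈ U, f₁ z ^ 3 - (c : ℂ) ^ 2 + (2 / 27) * z ^ 2 + g₁ z ^ 3 * z ^ 4 = 0) :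
    ∀ z ∈ U, ¬(z.im = 0 ∧ z.re ≤ 0) →
      z * ((-(z ^ ((1 : ℂ) / 3)) * f₁ z - z ^ ((5 : ℂ) / 3) * g₁ z + z / 3) ^ 2
            - (c : ℂ) ^ 2)
        = (-(z ^ ((1 : ℂ) / 3)) * f₁ z - z ^ ((5 : ℂ) / 3) * g₁ z + z / 3) ^ 3 :=
  w_solves_equation_general c U f₁ g₁ h1 h2
end

section
/- With notation as above (w_k roots of w³ - zw² + c²z = 0, z ≠ 0, p = c²-1, ξ_k = w_k + p/w_k, a = 2c - 1/c), one has ξ₁ξ₂ + ξ₁ξ₃ + ξ₂ξ₃ = 1 - a². -/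
/-! With `e₁ = z`, `e₂ = 0`, `e₃ = -c²z` the elementary symmetric functions of the `wₖ`,
expanding the products gives `∑ ξⱼξₖ = e₂ + p (e₁e₂ - 3e₃)/e₃ + p² e₁/e₃ = -3p - p²/c²`,
which for `p = c² - 1` is `1 - (2c - 1/c)²`. -/

theorem vieta_cubic {K : Type*} [Field K] [CharZero K] {a b d x y t : K}
    (h : ∀ w : K, w ^ 3 + a * w ^ 2 + b * w + d = (w - x) * (w - y) * (w - t)) :
    x + y + t = -a ∧ x * y + x * t + y * t = b ∧ x * y * t = -d := by
  refine ⟨?_, ?_, ?_⟩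
  · linear_combination (h 1) / 2 + (h (-1)) / 2 - h 0
  · linear_combination (h (-1)) / 2 - (h 1) / 2
  · linear_combination h 0

theorem esymm_two_add_div {K : Type*} [Field K] (p x y t : K)
    (hx : x ≠ 0) (hy : y ≠ 0) (ht : t ≠ 0) :
    (x + p / x) * (y + p / y) + (x + p / x) * (t + p / t) + (y + p / y) * (t + p / t)
      = (x * y + x * t + y * t)
        + p * ((x + y + t) * (x * y + x * t + y * t) - 3 * (x * y * t)) / (x * y * t)
        + p ^ 2 * (x + y + t) / (x * y * t) := by
  field_simp
  ring

theorem xi_second_symmetric_general (c : ℝ) (z w₁ w₂ w₃ : ℂ)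
    (hw₁ : w₁ ≠ 0) (hw₂ : w₂ ≠ 0) (hw₃ : w₃ ≠ 0)
    (hroots : ∀ w : ℂ, w ^ 3 - z * w ^ 2 + (c : ℂ) ^ 2 * z
      = (w - w₁) * (w - w₂) * (w - w₃)) :
    (w₁ + ((c : ℂ) ^ 2 - 1) / w₁) * (w₂ + ((c : ℂ) ^ 2 - 1) / w₂)
      + (w₁ + ((c : ℂ) ^ 2 - 1) / w₁) * (w₃ + ((c : ℂ) ^ 2 - 1) / w₃)
      + (w₂ + ((c : ℂ) ^ 2 - 1) / w₂) * (w₃ + ((c : ℂ) ^ 2 - 1) / w₃)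
      = 1 - (2 * (c : ℂ) - 1 / (c : ℂ)) ^ 2 := by
  obtain ⟨he₁, he₂, he₃⟩ := vieta_cubic (a := -z) (b := 0) (d := (c : ℂ) ^ 2 * z)
    fun w ↦ by rw [← hroots]; ring
  have hprod : w₁ * w₂ * w₃ ≠ 0 := mul_ne_zero (mul_ne_zero hw₁ hw₂) hw₃
  have hcz : (c : ℂ) ^ 2 * z ≠ 0 := by rwa [he₃, neg_ne_zero] at hprod
  have hc : (c : ℂ) ≠ 0 := pow_ne_zero_iff two_ne_zero |>.mp (left_ne_zero_of_mul hcz)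
  have hz : z ≠ 0 := right_ne_zero_of_mul hcz
  rw [esymm_two_add_div _ _ _ _ hw₁ hw₂ hw₃, he₁, he₂, he₃, neg_neg]
  field_simp
  ring

/-- With `ξₖ = wₖ + (c²-1)/wₖ` and `a = 2c - 1/c`, the second elementary symmetric
function of the `ξₖ` equals `1 - a²`. -/
theorem xi_second_symmetric (c : ℝ) (hc : 0 < c) (z w₁ w₂ w₃ : ℂ) (hz : z ≠ 0)
    (hw₁ : w₁ ≠ 0) (hw₂ : w₂ ≠ 0) (hw₃ : w₃ ≠ 0)
    (hroots : ∀ w : ℂ, w ^ 3 - z * w ^ 2 + (c : ℂ) ^ 2 * z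
      = (w - w₁) * (w - w₂) * (w - w₃)) :
    (w₁ + ((c : ℂ) ^ 2 - 1) / w₁) * (w₂ + ((c : ℂ) ^ 2 - 1) / w₂)
      + (w₁ + ((c : ℂ) ^ 2 - 1) / w₁) * (w₃ + ((c : ℂ) ^ 2 - 1) / w₃)
      + (w₂ + ((c : ℂ) ^ 2 - 1) / w₂) * (w₃ + ((c : ℂ) ^ 2 - 1) / w₃)
      = 1 - (2 * (c : ℂ) - 1 / (c : ℂ)) ^ 2 :=
  xi_second_symmetric_general c z w₁ w₂ w₃ hw₁ hw₂ hw₃ hroots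
end

section
/- With the same notation, ξ₁ξ₂ξ₃ = -a²z - (c²-1)³/(c²z). Consequently ξ₁, ξ₂, ξ₃ are exactly the three roots of the modified Pastur equation ξ³ - zξ² + (1-a²)ξ + a²z + (c²-1)³/(c²z) = 0. -/
/-!
By Vieta, the roots `wₖ` of `w³ - z w² + c² z` have elementary symmetric functions `z, 0, -c² z`.
Those of `ξₖ = wₖ + p/wₖ` are polynomials in `p` and the former divided by `w₁w₂w₃`, and
substituting gives the modified Pastur equation, since `a = (c² + p)/c`; the product `ξ₁ξ₂ξ₃` is
minus its constant term.
-/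

section Cubic

variable {K : Type*} [Field K]

theorem vieta_cubic_s12 [NeZero (2 : K)] {s₁ s₂ s₃ w₁ w₂ w₃ : K}
    (h : ∀ w, w ^ 3 - s₁ * w ^ 2 + s₂ * w - s₃ = (w - w₁) * (w - w₂) * (w - w₃)) :
    w₁ + w₂ + w₃ = s₁ ∧ w₁ * w₂ + w₁ * w₃ + w₂ * w₃ = s₂ ∧ w₁ * w₂ * w₃ = s₃ := by
  have h₀ := h 0
  have hpos := h 1
  have hneg := h (-1)
  refine ⟨mul_left_cancel₀ two_ne_zero ?_, mul_left_cancel₀ two_ne_zero ?_, ?_⟩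
  · linear_combination hpos + hneg - 2 * h₀
  · linear_combination hneg - hpos
  · linear_combination h₀

theorem cubic_eq_prod_sub_add_div {p s₁ s₂ s₃ w₁ w₂ w₃ : K}
    (h₁ : w₁ + w₂ + w₃ = s₁) (h₂ : w₁ * w₂ + w₁ * w₃ + w₂ * w₃ = s₂) (h₃ : w₁ * w₂ * w₃ = s₃)
    (hs₃ : s₃ ≠ 0) (x : K) :
    x ^ 3 - (s₁ + p * s₂ / s₃) * x ^ 2
        + (s₂ + p * (s₁ * s₂ - 3 * s₃) / s₃ + p ^ 2 * s₁ / s₃) * x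
        - (s₃ ^ 2 + p * (s₂ ^ 2 - 2 * s₁ * s₃) + p ^ 2 * (s₁ ^ 2 - 2 * s₂) + p ^ 3) / s₃
      = (x - (w₁ + p / w₁)) * (x - (w₂ + p / w₂)) * (x - (w₃ + p / w₃)) := by
  subst h₁ h₂ h₃
  have hw₁ : w₁ ≠ 0 := left_ne_zero_of_mul (left_ne_zero_of_mul hs₃)
  have hw₂ : w₂ ≠ 0 := right_ne_zero_of_mul (left_ne_zero_of_mul hs₃)
  have hw₃ : w₃ ≠ 0 := right_ne_zero_of_mul hs₃
  field_simp
  ring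

end Cubic

theorem xi_product_and_roots_general (c : ℝ) (hc : 0 < c) (z w₁ w₂ w₃ : ℂ) (hz : z ≠ 0)
    (hroots : ∀ w : ℂ, w ^ 3 - z * w ^ 2 + (c : ℂ) ^ 2 * z
      = (w - w₁) * (w - w₂) * (w - w₃)) :
    (w₁ + ((c : ℂ) ^ 2 - 1) / w₁) * (w₂ + ((c : ℂ) ^ 2 - 1) / w₂)
        * (w₃ + ((c : ℂ) ^ 2 - 1) / w₃)
      = -(2 * (c : ℂ) - 1 / (c : ℂ)) ^ 2 * z - ((c : ℂ) ^ 2 - 1) ^ 3 / ((c : ℂ) ^ 2 * z) ∧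
    ∀ x : ℂ,
      x ^ 3 - z * x ^ 2 + (1 - (2 * (c : ℂ) - 1 / (c : ℂ)) ^ 2) * x
          + (2 * (c : ℂ) - 1 / (c : ℂ)) ^ 2 * z
          + ((c : ℂ) ^ 2 - 1) ^ 3 / ((c : ℂ) ^ 2 * z)
        = (x - (w₁ + ((c : ℂ) ^ 2 - 1) / w₁)) * (x - (w₂ + ((c : ℂ) ^ 2 - 1) / w₂))
            * (x - (w₃ + ((c : ℂ) ^ 2 - 1) / w₃)) := by
  have hc₀ : (c : ℂ) ≠ 0 := Complex.ofReal_ne_zero.mpr hc.ne'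
  obtain ⟨he₁, he₂, he₃⟩ := vieta_cubic_s12 (s₁ := z) (s₂ := 0) (s₃ := -((c : ℂ) ^ 2 * z))
    fun w ↦ by rw [← hroots w]; ring
  refine (fun hpastur ↦ ⟨by linear_combination hpastur 0, hpastur⟩) fun x ↦ ?_
  have hs₃ : -((c : ℂ) ^ 2 * z) ≠ 0 := neg_ne_zero.mpr (mul_ne_zero (pow_ne_zero 2 hc₀) hz)
  rw [← cubic_eq_prod_sub_add_div he₁ he₂ he₃ hs₃]
  field_simp
  ring

/-- With `ξₖ = wₖ + (c²-1)/wₖ` and `a = 2c - 1/c`, one has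
`ξ₁ξ₂ξ₃ = -a²z - (c²-1)³/(c²z)`; consequently `ξ₁,ξ₂,ξ₃` are exactly the roots of
the modified Pastur equation. -/
theorem xi_product_and_roots (c : ℝ) (hc : 0 < c) (z w₁ w₂ w₃ : ℂ) (hz : z ≠ 0)
    (hw₁ : w₁ ≠ 0) (hw₂ : w₂ ≠ 0) (hw₃ : w₃ ≠ 0)
    (hroots : ∀ w : ℂ, w ^ 3 - z * w ^ 2 + (c : ℂ) ^ 2 * z
      = (w - w₁) * (w - w₂) * (w - w₃)) :
    (w₁ + ((c : ℂ) ^ 2 - 1) / w₁) * (w₂ + ((c : ℂ) ^ 2 - 1) / w₂)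
        * (w₃ + ((c : ℂ) ^ 2 - 1) / w₃)
      = -(2 * (c : ℂ) - 1 / (c : ℂ)) ^ 2 * z - ((c : ℂ) ^ 2 - 1) ^ 3 / ((c : ℂ) ^ 2 * z) ∧
    ∀ x : ℂ,
      x ^ 3 - z * x ^ 2 + (1 - (2 * (c : ℂ) - 1 / (c : ℂ)) ^ 2) * x
          + (2 * (c : ℂ) - 1 / (c : ℂ)) ^ 2 * z
          + ((c : ℂ) ^ 2 - 1) ^ 3 / ((c : ℂ) ^ 2 * z)
        = (x - (w₁ + ((c : ℂ) ^ 2 - 1) / w₁)) * (x - (w₂ + ((c : ℂ) ^ 2 - 1) / w₂))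
            * (x - (w₃ + ((c : ℂ) ^ 2 - 1) / w₃)) :=
  xi_product_and_roots_general c hc z w₁ w₂ w₃ hz hroots
end
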